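/- arXiv:1604.01242 — 2 statements merged into one kernel-verified Lean document; each statement's English description precedes it below -/
import Mathlib

section
/- Let φ ∈ (0, π) and let E(φ) = {u ∈ ℝ² \ {0} : u₂ > ‖u‖ cos(φ/2)}. For any nonzero z ∈ ℝ² with angle θ_z from the positive z₂-axis, sup_{u ∈ E(φ)} cos(θ_{uz}) equals: 1 if θ_z ∈ [-φ/2, φ/2]; cos(θ_z - φ/2) if θ_z ∈ [φ/2, π]; and cos(θ_z + φ/2) if θ_z ∈ [-π, -φ/2]. -/
open Set Real

/-- Dot product on ℝ². -/
def dot2 (u z : ℝ × ℝ) : ℝ := u.1 * z.1 + u.2 * z.2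

/-- Euclidean norm on ℝ². -/
noncomputable def nrm2 (u : ℝ × ℝ) : ℝ := Real.sqrt (u.1 ^ 2 + u.2 ^ 2)

/-- The open cone of half-angle `φ/2` about the positive `z₂`-axis. -/
noncomputable def coneE (φ : ℝ) : Set (ℝ × ℝ) :=
  {u : ℝ × ℝ | u ≠ 0 ∧ u.2 > nrm2 u * Real.cos (φ / 2)}

lemma nrm2_pos {u : ℝ × ℝ} (hu : u ≠ 0) : 0 < nrm2 u := by
  have h : u.1 ≠ 0 ∨ u.2 ≠ 0 := by
    by_contra h; push_neg at h
    exact hu (Prod.ext h.1 h.2)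
  have h2 : 0 < u.1 ^ 2 + u.2 ^ 2 := by
    rcases h with h | h
    · have h1 : 0 < u.1 ^ 2 := by positivity
      nlinarith [sq_nonneg u.2]
    · have h1 : 0 < u.2 ^ 2 := by positivity
      nlinarith [sq_nonneg u.1]
  exact Real.sqrt_pos.mpr h2

lemma exists_angle {u : ℝ × ℝ} (hu : u ≠ 0) :
    ∃ α ∈ Icc (-π) π, Real.sin α = u.1 / nrm2 u ∧ Real.cos α = u.2 / nrm2 u := by
  have hs : 0 < nrm2 u := nrm2_pos hu
  have hs2 : nrm2 u ^ 2 = u.1 ^ 2 + u.2 ^ 2 := Real.sq_sqrt (by positivity)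
  have hm1 : -1 ≤ u.2 / nrm2 u := by
    rw [le_div_iff₀ hs]; nlinarith [sq_nonneg (u.2 + nrm2 u), sq_nonneg u.1]
  have hm2 : u.2 / nrm2 u ≤ 1 := by
    rw [div_le_iff₀ hs]; nlinarith [sq_nonneg (u.2 - nrm2 u), sq_nonneg u.1]
  have hsq : 1 - (u.2 / nrm2 u) ^ 2 = (u.1 / nrm2 u) ^ 2 := by
    field_simp; nlinarith
  rcases le_or_gt 0 u.1 with h1 | h1
  · refine ⟨Real.arccos (u.2 / nrm2 u),
      ⟨by linarith [Real.arccos_nonneg (u.2 / nrm2 u), Real.pi_pos], Real.arccos_le_pi _⟩,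
      ?_, Real.cos_arccos hm1 hm2⟩
    rw [Real.sin_arccos, hsq, Real.sqrt_sq (by positivity)]
  · refine ⟨-Real.arccos (u.2 / nrm2 u),
      ⟨by linarith [Real.arccos_le_pi (u.2 / nrm2 u)],
       by linarith [Real.arccos_nonneg (u.2 / nrm2 u), Real.pi_pos]⟩,
      ?_, by rw [Real.cos_neg]; exact Real.cos_arccos hm1 hm2⟩
    rw [Real.sin_neg, Real.sin_arccos, hsq, Real.sqrt_sq_eq_abs,
      abs_of_neg (div_neg_of_neg_of_pos h1 hs)]
    ring

lemma image_cone (φ : ℝ) (hφ : φ ∈ Set.Ioo 0 π) (θ r : ℝ) (hr : 0 < r)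
    (z : ℝ × ℝ) (hz : z = (r * Real.sin θ, r * Real.cos θ)) :
    (fun u => dot2 u z / (nrm2 u * nrm2 z)) '' coneE φ
      = Real.cos '' Set.Ioo (θ - φ / 2) (θ + φ / 2) := by
  have hπ := Real.pi_pos
  have hzr : nrm2 z = r := by
    rw [hz]; unfold nrm2; simp only
    have : (r * Real.sin θ) ^ 2 + (r * Real.cos θ) ^ 2 = r ^ 2 := by
      have := Real.sin_sq_add_cos_sq θ; nlinarith
    rw [this, Real.sqrt_sq hr.le]
  ext y
  simp only [mem_image]
  constructor
  · rintro ⟨u, ⟨hu0, hcone⟩, rfl⟩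
    obtain ⟨α, hαmem, hsin, hcos⟩ := exists_angle hu0
    have hs : 0 < nrm2 u := nrm2_pos hu0
    have hcosα : Real.cos (φ / 2) < Real.cos α := by
      rw [hcos, lt_div_iff₀ hs]; linarith [hcone]
    have hαlt : |α| < φ / 2 := by
      by_contra h; push_neg at h
      have h1 : Real.cos |α| ≤ Real.cos (φ / 2) :=
        Real.cos_le_cos_of_nonneg_of_le_pi (by linarith [hφ.1]) (abs_le.mpr ⟨hαmem.1, hαmem.2⟩) h
      rw [Real.cos_abs] at h1; linarith
    obtain ⟨hα1, hα2⟩ := abs_lt.mp hαlt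
    refine ⟨θ - α, ⟨by linarith, by linarith⟩, ?_⟩
    have hu1 : u.1 = nrm2 u * Real.sin α := by rw [hsin]; field_simp
    have hu2 : u.2 = nrm2 u * Real.cos α := by rw [hcos]; field_simp
    rw [hz] at hzr
    rw [Real.cos_sub, hz]; unfold dot2; simp only
    rw [hzr, hu1, hu2]
    field_simp
    ring
  · rintro ⟨x, hx, rfl⟩
    set α := θ - x with hαdef
    have hα : |α| < φ / 2 := by
      rw [abs_lt]; constructor <;> [skip; skip] <;> simp only [hαdef] <;>
        [linarith [hx.2]; linarith [hx.1]]
    have hcosφ : Real.cos (φ / 2) < Real.cos α := by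
      rw [← Real.cos_abs α]
      exact Real.cos_lt_cos_of_nonneg_of_le_pi (abs_nonneg α) (by linarith [hφ.2]) hα
    have hcospos : 0 < Real.cos (φ / 2) :=
      Real.cos_pos_of_mem_Ioo ⟨by linarith [hφ.1], by linarith [hφ.2]⟩
    have hn : nrm2 (Real.sin α, Real.cos α) = 1 := by
      unfold nrm2; simp only
      rw [Real.sin_sq_add_cos_sq, Real.sqrt_one]
    refine ⟨(Real.sin α, Real.cos α), ⟨?_, ?_⟩, ?_⟩
    · intro h
      have : Real.cos α = 0 := congrArg Prod.snd h
      linarith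
    · rw [hn]; simpa using hcosφ
    · rw [hz] at hzr
      rw [hn, hz]; unfold dot2; simp only
      rw [hzr, div_eq_iff (by positivity : (1:ℝ) * r ≠ 0)]
      have hxa : Real.cos x = Real.cos θ * Real.cos α + Real.sin θ * Real.sin α := by
        rw [show x = θ - α by rw [hαdef]; ring, Real.cos_sub]
      rw [hxa]
      ring

lemma le_csSup_of_mem_closure' {S : Set ℝ} (hb : BddAbove S) {x : ℝ} (hx : x ∈ closure S) :
    x ≤ sSup S :=
  closure_minimal (fun _ hy => le_csSup hb hy) isClosed_Iic hx

lemma sSup_cos_image_Ioo {a b c : ℝ} (hab : a < b) (hc : c ∈ Set.Icc a b)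
    (hmax : ∀ x ∈ Set.Icc a b, Real.cos x ≤ Real.cos c) :
    sSup (Real.cos '' Set.Ioo a b) = Real.cos c := by
  have hbdd : BddAbove (Real.cos '' Set.Ioo a b) :=
    ⟨1, by rintro y ⟨x, _, rfl⟩; exact Real.cos_le_one x⟩
  apply le_antisymm
  · apply csSup_le ⟨_, mem_image_of_mem _ (show (a + b) / 2 ∈ Set.Ioo a b by constructor <;> linarith)⟩
    rintro y ⟨x, hx, rfl⟩
    exact hmax x ⟨hx.1.le, hx.2.le⟩
  · apply le_csSup_of_mem_closure' hbdd
    have h1 : c ∈ closure (Set.Ioo a b) := by rw [closure_Ioo hab.ne]; exact hc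
    exact image_closure_subset_closure_image Real.continuous_cos ⟨c, h1, rfl⟩

lemma cos_le_left {a b x : ℝ} (ha : 0 ≤ a) (hx : x ∈ Set.Icc a b) (hb : b ≤ 2 * π - a) :
    Real.cos x ≤ Real.cos a := by
  rcases le_or_gt x π with h | h
  · exact Real.cos_le_cos_of_nonneg_of_le_pi ha h hx.1
  · have h2 : Real.cos x = Real.cos (2 * π - x) := by
      rw [Real.cos_sub]
      simp [Real.cos_two_pi, Real.sin_two_pi]
    rw [h2]
    exact Real.cos_le_cos_of_nonneg_of_le_pi ha (by linarith) (by linarith [hx.2])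

/-- Let `φ ∈ (0, π)` and `E(φ)` be the open cone of half-angle `φ/2` about the positive
`z₂`-axis. For any nonzero `z ∈ ℝ²` with signed angle `θ_z ∈ (-π, π]` from the positive
`z₂`-axis (`z = (r sin θ_z, r cos θ_z)`, `r > 0`),
`sup_{u ∈ E(φ)} cos θ_{uz}` equals `1` if `θ_z ∈ [-φ/2, φ/2]`; `cos(θ_z - φ/2)` if
`θ_z ∈ [φ/2, π]`; and `cos(θ_z + φ/2)` if `θ_z ∈ [-π, -φ/2]`. -/
theorem sup_cos_angle_over_cone
    (φ : ℝ) (hφ : φ ∈ Set.Ioo 0 π)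
    (θ r : ℝ) (hr : 0 < r) (hθ : θ ∈ Set.Ioc (-π) π)
    (z : ℝ × ℝ) (hz : z = (r * Real.sin θ, r * Real.cos θ)) :
    (θ ∈ Set.Icc (-(φ / 2)) (φ / 2) →
      sSup ((fun u => dot2 u z / (nrm2 u * nrm2 z)) '' coneE φ) = 1) ∧
    (θ ∈ Set.Icc (φ / 2) π →
      sSup ((fun u => dot2 u z / (nrm2 u * nrm2 z)) '' coneE φ) = Real.cos (θ - φ / 2)) ∧
    (θ ∈ Set.Icc (-π) (-(φ / 2)) →
      sSup ((fun u => dot2 u z / (nrm2 u * nrm2 z)) '' coneE φ) = Real.cos (θ + φ / 2)) := by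
  have hπ := Real.pi_pos
  have himg := image_cone φ hφ θ r hr z hz
  have hab : θ - φ / 2 < θ + φ / 2 := by linarith [hφ.1]
  refine ⟨fun h => ?_, fun h => ?_, fun h => ?_⟩
  · rw [himg, show (1 : ℝ) = Real.cos 0 by rw [Real.cos_zero]]
    exact sSup_cos_image_Ioo hab ⟨by linarith [h.2], by linarith [h.1]⟩
      (fun x _ => by rw [Real.cos_zero]; exact Real.cos_le_one x)
  · rw [himg]
    exact sSup_cos_image_Ioo hab ⟨le_refl _, hab.le⟩
      (fun x hx => cos_le_left (by linarith [h.1]) hx (by linarith [h.2, hφ.2]))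
  · rw [himg]
    refine sSup_cos_image_Ioo hab ⟨hab.le, le_refl _⟩ (fun x hx => ?_)
    have h1 : Real.cos x = Real.cos (-x) := (Real.cos_neg x).symm
    have h2 : Real.cos (θ + φ / 2) = Real.cos (-(θ + φ / 2)) := (Real.cos_neg _).symm
    rw [h1, h2]
    exact cos_le_left (by linarith [h.2])
      (show -x ∈ Set.Icc (-(θ + φ / 2)) (-(θ - φ / 2)) from ⟨by linarith [hx.2], by linarith [hx.1]⟩)
      (by linarith [h.1, hφ.2])
end

section
/- Let z be a standard bivariate normal vector, φ ∈ (0, π), w > 0, and E(φ) the open cone of half-angle φ/2 about the positive z₂-axis. Then P( sup_{u ∈ E(φ)} (u·z)/‖u‖ < w ) = (φ/(2π))·F₂(w²) + (π-φ)/(2π) + (1/2)·F₁(w²), where F₁ and F₂ are the cdfs of chi-squared distributions with 1 and 2 degrees of freedom respectively. -/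
/-!
For `z` in the cone `E(φ)` the supremum of `u·z/‖u‖` is `‖z‖`. Outside the cone it is controlled
by the two edges `e± = (±sin (φ/2), cos (φ/2))` and their outward normals
`n± = (±cos (φ/2), -sin (φ/2))`, and for `w > 0` the event `sup ≥ w` is the disjoint union of the
sector `{z ∈ E(φ), ‖z‖ ≥ w}` and the wedges `{e±·z ≥ w, n±·z ≥ 0}`. An orthogonal map sends each
wedge onto the quadrant `[w, ∞) × [0, ∞)`, of Gaussian probability `(1 - Φ(w))/2`, and polar
coordinates give the sector probability `(φ/2π) e^{-w²/2}`; so the probability is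
`Φ(w) - (φ/2π) e^{-w²/2}`.
-/

open MeasureTheory ProbabilityTheory Set Real

/-- The cdf of the chi-squared distribution with 2 degrees of freedom: `F₂(t) = 1 - e^{-t/2}`. -/
noncomputable def chi2cdf (t : ℝ) : ℝ := 1 - Real.exp (-(t / 2))

/-- The standard normal cdf `Φ`. -/
noncomputable def stdNormalCDF (x : ℝ) : ℝ := ((gaussianReal 0 1) (Set.Iic x)).toReal

/-- The cdf of the chi-squared distribution with 1 degree of freedom:
`F₁(t) = 2Φ(√t) - 1` for `t ≥ 0`. -/
noncomputable def chi1cdf (t : ℝ) : ℝ := 2 * stdNormalCDF (Real.sqrt t) - 1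

open scoped Topology
open Filter

namespace ConeCoverage

local notation "γ₂" => Measure.prod (gaussianReal 0 1) (gaussianReal 0 1)

lemma nrm2_nonneg (u : ℝ × ℝ) : 0 ≤ nrm2 u := sqrt_nonneg _

lemma sq_nrm2 (u : ℝ × ℝ) : nrm2 u ^ 2 = u.1 ^ 2 + u.2 ^ 2 := sq_sqrt (by positivity)

lemma nrm2_pos {u : ℝ × ℝ} (hu : u ≠ 0) : 0 < nrm2 u := by
  refine sqrt_pos.2 ((add_nonneg (sq_nonneg _) (sq_nonneg _)).lt_of_ne fun h => hu ?_)
  have h1 : u.1 ^ 2 = 0 := by linarith [sq_nonneg u.1, sq_nonneg u.2]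
  have h2 : u.2 ^ 2 = 0 := by linarith [sq_nonneg u.1, sq_nonneg u.2]
  exact Prod.ext (pow_eq_zero_iff two_ne_zero |>.1 h1) (pow_eq_zero_iff two_ne_zero |>.1 h2)

lemma continuous_nrm2 : Continuous nrm2 := by unfold nrm2; fun_prop

lemma dot2_le_nrm2_mul_nrm2 (u z : ℝ × ℝ) : dot2 u z ≤ nrm2 u * nrm2 z := by
  rw [nrm2, nrm2, ← sqrt_mul (by positivity)]
  refine (le_abs_self _).trans (abs_le_sqrt ?_)
  unfold dot2
  nlinarith [sq_nonneg (u.1 * z.2 - u.2 * z.1)]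

/-- For `σ = ±1`, the coordinates of a vector along the edge `(σ sin (φ/2), cos (φ/2))` of
`coneE φ` and along the outward normal `(σ cos (φ/2), -sin (φ/2))` of that edge. -/
noncomputable def edgeFrame (φ σ : ℝ) : ℝ × ℝ →ₗ[ℝ] ℝ × ℝ :=
  Matrix.toLin (Module.Basis.finTwoProd ℝ) (Module.Basis.finTwoProd ℝ)
    !![σ * sin (φ / 2), cos (φ / 2); σ * cos (φ / 2), -sin (φ / 2)]

@[simp]
lemma edgeFrame_apply (φ σ : ℝ) (z : ℝ × ℝ) :
    edgeFrame φ σ z = (σ * sin (φ / 2) * z.1 + cos (φ / 2) * z.2,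
      σ * cos (φ / 2) * z.1 + -sin (φ / 2) * z.2) :=
  Matrix.toLin_finTwoProd_apply _ _ _ _ z

lemma dot2_eq_edgeFrame {σ : ℝ} (hσ : |σ| = 1) (φ : ℝ) (u z : ℝ × ℝ) :
    dot2 u z = (edgeFrame φ σ u).1 * (edgeFrame φ σ z).1
      + (edgeFrame φ σ u).2 * (edgeFrame φ σ z).2 := by
  have hσ2 : σ ^ 2 = 1 := by rw [← sq_abs, hσ, one_pow]
  simp only [edgeFrame_apply, dot2]
  linear_combination (-(u.1 * z.1 * σ ^ 2) - u.2 * z.2) * sin_sq_add_cos_sq (φ / 2)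
    - u.1 * z.1 * hσ2

lemma nrm2_edge {σ : ℝ} (hσ : |σ| = 1) (φ : ℝ) : nrm2 (σ * sin (φ / 2), cos (φ / 2)) = 1 := by
  rw [nrm2, mul_pow, ← sq_abs σ, hσ, one_pow, one_mul, sin_sq_add_cos_sq, sqrt_one]

lemma dot2_edge (φ σ : ℝ) (z : ℝ × ℝ) :
    dot2 (σ * sin (φ / 2), cos (φ / 2)) z = (edgeFrame φ σ z).1 := by
  simp only [dot2, edgeFrame_apply]

lemma edgeFrame_fst_le_nrm2 {σ : ℝ} (hσ : |σ| = 1) (φ : ℝ) (u : ℝ × ℝ) :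
    (edgeFrame φ σ u).1 ≤ nrm2 u := by
  simpa [← dot2_edge, nrm2_edge hσ, dot2, mul_comm] using
    dot2_le_nrm2_mul_nrm2 (σ * sin (φ / 2), cos (φ / 2)) u

variable {φ : ℝ}

lemma cos_half_pos (hφ : φ ∈ Ioo 0 π) : 0 < cos (φ / 2) :=
  cos_pos_of_mem_Ioo ⟨by linarith [hφ.1, pi_pos], by linarith [hφ.2]⟩

lemma sin_half_pos (hφ : φ ∈ Ioo 0 π) : 0 < sin (φ / 2) :=
  sin_pos_of_pos_of_lt_pi (by linarith [hφ.1]) (by linarith [hφ.2, pi_pos])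

lemma mem_coneE_iff (hφ : φ ∈ Ioo 0 π) {u : ℝ × ℝ} :
    u ∈ coneE φ ↔ cos (φ / 2) * |u.1| < sin (φ / 2) * u.2 := by
  have hc := cos_half_pos hφ
  have hs := sin_half_pos hφ
  have hcs := sin_sq_add_cos_sq (φ / 2)
  have hn := sq_nrm2 u
  have hn0 := nrm2_nonneg u
  have ha := sq_abs u.1
  have ha0 := abs_nonneg u.1
  constructor
  · rintro ⟨-, hu⟩
    have hu2 : 0 < u.2 := lt_of_le_of_lt (by positivity) hu
    refine lt_of_pow_lt_pow_left₀ 2 (by positivity) ?_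
    nlinarith [mul_self_lt_mul_self (by positivity) hu]
  · intro hu
    have hu2 : 0 < u.2 := by nlinarith
    refine ⟨fun h => by simp [h] at hu2, ?_⟩
    refine lt_of_pow_lt_pow_left₀ 2 hu2.le ?_
    nlinarith [mul_self_lt_mul_self (by positivity) hu]

lemma edgeFrame_snd_neg_of_mem_coneE (hφ : φ ∈ Ioo 0 π) {σ : ℝ} (hσ : |σ| = 1) {u : ℝ × ℝ}
    (hu : u ∈ coneE φ) : (edgeFrame φ σ u).2 < 0 := by
  have hσu : σ * u.1 ≤ |u.1| := (le_abs_self _).trans (by rw [abs_mul, hσ, one_mul])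
  rw [mem_coneE_iff hφ] at hu
  simp only [edgeFrame_apply]
  nlinarith [mul_le_mul_of_nonneg_left hσu (cos_half_pos hφ).le]

lemma edgeFrame_snd_nonneg_of_notMem_coneE (hφ : φ ∈ Ioo 0 π) {z : ℝ × ℝ} (hz : z ∉ coneE φ) :
    0 ≤ (edgeFrame φ 1 z).2 ∨ 0 ≤ (edgeFrame φ (-1) z).2 := by
  rw [mem_coneE_iff hφ, not_lt] at hz
  simp only [edgeFrame_apply]
  rcases abs_cases z.1 with ⟨h, -⟩ | ⟨h, -⟩
  · left; rw [h] at hz; linarith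
  · right; rw [h] at hz; linarith

noncomputable def coneSup (φ : ℝ) (z : ℝ × ℝ) : ℝ :=
  sSup ((fun u => dot2 u z / nrm2 u) '' coneE φ)

lemma coneSup_le (hφ : φ ∈ Ioo 0 π) {z : ℝ × ℝ} {B : ℝ}
    (h : ∀ u ∈ coneE φ, dot2 u z ≤ nrm2 u * B) : coneSup φ z ≤ B := by
  have haxis : ((0 : ℝ), (1 : ℝ)) ∈ coneE φ := by
    rw [mem_coneE_iff hφ]; simpa using sin_half_pos hφ
  refine csSup_le ⟨_, mem_image_of_mem _ haxis⟩ ?_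
  rintro _ ⟨u, hu, rfl⟩
  rw [div_le_iff₀ (nrm2_pos hu.1), mul_comm]
  exact h u hu

lemma dot2_le_nrm2_mul_coneSup {z u : ℝ × ℝ} (hu : u ∈ closure (coneE φ)) :
    dot2 u z ≤ nrm2 u * coneSup φ z := by
  have hbdd : BddAbove ((fun u => dot2 u z / nrm2 u) '' coneE φ) := by
    refine ⟨nrm2 z, ?_⟩
    rintro _ ⟨v, hv, rfl⟩
    rw [div_le_iff₀ (nrm2_pos hv.1), mul_comm]
    exact dot2_le_nrm2_mul_nrm2 v z
  refine closure_minimal (s := coneE φ) (t := {u | dot2 u z ≤ nrm2 u * coneSup φ z})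
    (fun v hv => ?_) (isClosed_le ?_ ?_) hu
  · show dot2 v z ≤ nrm2 v * coneSup φ z
    rw [mul_comm, ← div_le_iff₀ (nrm2_pos hv.1)]
    exact le_csSup hbdd (mem_image_of_mem _ hv)
  · unfold dot2; fun_prop
  · exact continuous_nrm2.mul continuous_const

lemma nrm2_le_coneSup {z : ℝ × ℝ} (hz : z ∈ coneE φ) : nrm2 z ≤ coneSup φ z := by
  have h := dot2_le_nrm2_mul_coneSup (z := z) (subset_closure hz)
  have hdot : dot2 z z = nrm2 z * nrm2 z := by rw [← sq, sq_nrm2, dot2]; ring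
  rw [hdot] at h
  exact le_of_mul_le_mul_left h (nrm2_pos hz.1)

lemma edge_mem_closure_coneE (hφ : φ ∈ Ioo 0 π) {σ : ℝ} (hσ : |σ| = 1) :
    (σ * sin (φ / 2), cos (φ / 2)) ∈ closure (coneE φ) := by
  have hlim : Tendsto (fun t : ℝ => (σ * sin (φ / 2), cos (φ / 2) + t)) (𝓝[>] 0)
      (𝓝 (σ * sin (φ / 2), cos (φ / 2))) := by
    refine tendsto_nhdsWithin_of_tendsto_nhds ?_
    exact (continuous_const.prodMk (continuous_const.add continuous_id)).tendsto' 0 _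
      (by simp)
  refine mem_closure_of_tendsto hlim ?_
  filter_upwards [self_mem_nhdsWithin] with t (ht : 0 < t)
  rw [mem_coneE_iff hφ, abs_mul, hσ, one_mul, abs_of_pos (sin_half_pos hφ)]
  nlinarith [sin_half_pos hφ]

lemma edgeFrame_fst_le_coneSup (hφ : φ ∈ Ioo 0 π) {σ : ℝ} (hσ : |σ| = 1) (z : ℝ × ℝ) :
    (edgeFrame φ σ z).1 ≤ coneSup φ z := by
  simpa [dot2_edge, nrm2_edge hσ] using
    dot2_le_nrm2_mul_coneSup (z := z) (edge_mem_closure_coneE hφ hσ)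

lemma coneSup_le_edgeFrame_fst (hφ : φ ∈ Ioo 0 π) {σ : ℝ} (hσ : |σ| = 1) {z : ℝ × ℝ}
    (ha : 0 ≤ (edgeFrame φ σ z).1) (ht : 0 ≤ (edgeFrame φ σ z).2) :
    coneSup φ z ≤ (edgeFrame φ σ z).1 := by
  refine coneSup_le hφ fun u hu => ?_
  rw [dot2_eq_edgeFrame hσ φ]
  nlinarith [mul_le_mul_of_nonneg_right (edgeFrame_fst_le_nrm2 hσ φ u) ha,
    mul_nonpos_of_nonpos_of_nonneg (edgeFrame_snd_neg_of_mem_coneE hφ hσ hu).le ht]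

lemma coneSup_nonpos (hφ : φ ∈ Ioo 0 π) {σ : ℝ} (hσ : |σ| = 1) {z : ℝ × ℝ}
    (h₁ : (edgeFrame φ σ z).1 ≤ 0) (h₂ : (edgeFrame φ (-σ) z).1 ≤ 0) : coneSup φ z ≤ 0 := by
  refine coneSup_le hφ fun u hu => ?_
  have hσ' : |-σ| = 1 := (abs_neg σ).trans hσ
  have hσ2 : σ ^ 2 = 1 := by rw [← sq_abs, hσ, one_pow]
  -- Up to the factor `2 sin (φ/2) cos (φ/2)`, the negated normal coordinates of `u` are its
  -- (positive) coefficients in the basis formed by the two edges.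
  have key : 2 * sin (φ / 2) * cos (φ / 2) * dot2 u z
      = -(edgeFrame φ (-σ) u).2 * (edgeFrame φ σ z).1
        - (edgeFrame φ σ u).2 * (edgeFrame φ (-σ) z).1 := by
    simp only [edgeFrame_apply, dot2]
    linear_combination -2 * sin (φ / 2) * cos (φ / 2) * u.1 * z.1 * hσ2
  have hsc := mul_pos (sin_half_pos hφ) (cos_half_pos hφ)
  nlinarith [mul_nonneg_of_nonpos_of_nonpos h₁ (edgeFrame_snd_neg_of_mem_coneE hφ hσ' hu).le,
    mul_nonneg_of_nonpos_of_nonpos h₂ (edgeFrame_snd_neg_of_mem_coneE hφ hσ hu).le]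

def sector (φ w : ℝ) : Set (ℝ × ℝ) := {z | z ∈ coneE φ ∧ w ≤ nrm2 z}

def wedge (φ w σ : ℝ) : Set (ℝ × ℝ) := edgeFrame φ σ ⁻¹' (Ici w ×ˢ Ici 0)

lemma mem_wedge {w σ : ℝ} {z : ℝ × ℝ} :
    z ∈ wedge φ w σ ↔ w ≤ (edgeFrame φ σ z).1 ∧ 0 ≤ (edgeFrame φ σ z).2 := Iff.rfl

lemma coneSup_lt_of_edgeFrame_snd_nonneg (hφ : φ ∈ Ioo 0 π) {σ w : ℝ} (hσ : |σ| = 1)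
    (hw : 0 < w) {z : ℝ × ℝ} (ht : 0 ≤ (edgeFrame φ σ z).2) (h₁ : z ∉ wedge φ w σ)
    (h₂ : z ∉ wedge φ w (-σ)) : coneSup φ z < w := by
  rw [mem_wedge, not_and', not_le] at h₁ h₂
  by_cases ha : 0 ≤ (edgeFrame φ σ z).1
  · exact (coneSup_le_edgeFrame_fst hφ hσ ha ht).trans_lt (h₁ ht)
  by_cases hb : (edgeFrame φ (-σ) z).1 ≤ 0
  · exact (coneSup_nonpos hφ hσ (not_le.1 ha).le hb).trans_lt hw
  have ht' : 0 ≤ (edgeFrame φ (-σ) z).2 := by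
    simp only [edgeFrame_apply] at ha hb ht ⊢
    nlinarith [sin_half_pos hφ, cos_half_pos hφ]
  exact (coneSup_le_edgeFrame_fst hφ ((abs_neg σ).trans hσ) (not_le.1 hb).le ht').trans_lt
    (h₂ ht')

lemma coneSup_lt_iff (hφ : φ ∈ Ioo 0 π) {w : ℝ} (hw : 0 < w) {z : ℝ × ℝ} :
    coneSup φ z < w ↔ z ∉ sector φ w ∪ wedge φ w 1 ∪ wedge φ w (-1) := by
  constructor
  · rintro h ((⟨hz, hwz⟩ | ⟨hwz, -⟩) | ⟨hwz, -⟩)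
    · exact (hwz.trans (nrm2_le_coneSup hz)).not_gt h
    · exact (hwz.trans (edgeFrame_fst_le_coneSup hφ abs_one z)).not_gt h
    · exact (hwz.trans (edgeFrame_fst_le_coneSup hφ (by simp) z)).not_gt h
  · intro h
    simp only [mem_union, not_or] at h
    obtain ⟨⟨hC, hW₁⟩, hW₂⟩ := h
    by_cases hz : z ∈ coneE φ
    · exact (coneSup_le hφ fun u _ => dot2_le_nrm2_mul_nrm2 u z).trans_lt
        (not_le.1 fun hwz => hC ⟨hz, hwz⟩)
    rcases edgeFrame_snd_nonneg_of_notMem_coneE hφ hz with ht | ht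
    · exact coneSup_lt_of_edgeFrame_snd_nonneg hφ abs_one hw ht hW₁ hW₂
    · exact coneSup_lt_of_edgeFrame_snd_nonneg hφ (by simp) hw ht hW₂ (by rwa [neg_neg])

lemma gaussianReal_real_Ici (x : ℝ) : (gaussianReal 0 1).real (Ici x) = 1 - stdNormalCDF x := by
  rw [← measureReal_congr ((gaussianReal_absolutelyContinuous 0 one_ne_zero).ae_eq Ioi_ae_eq_Ici),
    ← compl_Iic, probReal_compl_eq_one_sub measurableSet_Iic, stdNormalCDF, measureReal_def]

lemma gaussianReal_real_Ici_zero : (gaussianReal 0 1).real (Ici 0) = 1 / 2 := by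
  have hsymm : (gaussianReal 0 1).real (Ici 0) = stdNormalCDF 0 := calc
    _ = ((gaussianReal 0 1).map (-·)).real (Ici 0) := by rw [gaussianReal_map_neg, neg_zero]
    _ = stdNormalCDF 0 := by
      rw [map_measureReal_apply measurable_neg measurableSet_Ici, stdNormalCDF, ← measureReal_def]
      simp
  linarith [gaussianReal_real_Ici 0]

lemma gaussianReal_prod_eq_withDensity :
    γ₂ = volume.withDensity fun z : ℝ × ℝ =>
      ENNReal.ofReal ((2 * π)⁻¹ * rexp (-(z.1 ^ 2 + z.2 ^ 2) / 2)) := by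
  rw [gaussianReal_of_var_ne_zero 0 one_ne_zero,
    prod_withDensity (measurable_gaussianPDF 0 1) (measurable_gaussianPDF 0 1),
    Measure.volume_eq_prod]
  congr with z
  rw [gaussianPDF, gaussianPDF, ← ENNReal.ofReal_mul (gaussianPDFReal_nonneg 0 1 _)]
  congr 1
  simp only [gaussianPDFReal, sub_zero, NNReal.coe_one, mul_one]
  rw [mul_mul_mul_comm, ← mul_inv, mul_self_sqrt (by positivity), ← exp_add]
  ring_nf

lemma measurePreserving_gaussianReal_prod_of_sq_add_sq (T : ℝ × ℝ →ₗ[ℝ] ℝ × ℝ)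
    (hdet : |LinearMap.det T| = 1) (hT : ∀ z, (T z).1 ^ 2 + (T z).2 ^ 2 = z.1 ^ 2 + z.2 ^ 2) :
    MeasurePreserving T γ₂ γ₂ := by
  have hmeas : Measurable T := T.continuous_of_finiteDimensional.measurable
  have hvol : MeasurePreserving T volume volume := by
    refine ⟨hmeas, ?_⟩
    have hdet0 : LinearMap.det T ≠ 0 := fun h => by simp [h] at hdet
    rw [Measure.map_linearMap_addHaar_eq_smul_addHaar _ hdet0, abs_inv, hdet]
    simp
  refine ⟨hmeas, ?_⟩
  ext s hs
  rw [Measure.map_apply hmeas hs, gaussianReal_prod_eq_withDensity, withDensity_apply _ hs,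
    withDensity_apply _ (hmeas hs), ← hvol.setLIntegral_comp_preimage hs (by fun_prop)]
  simp only [hT]

lemma gaussianReal_prod_eq_lintegral_polarCoord {A : Set (ℝ × ℝ)} (hA : MeasurableSet A) :
    γ₂ A = ∫⁻ p in polarCoord.symm ⁻¹' A ∩ polarCoord.target,
      ENNReal.ofReal (p.1 * ((2 * π)⁻¹ * rexp (-p.1 ^ 2 / 2))) := by
  have hsymm : Measurable polarCoord.symm := continuous_polarCoord_symm.measurable
  rw [gaussianReal_prod_eq_withDensity, withDensity_apply _ hA, ← lintegral_indicator hA,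
    ← lintegral_comp_polarCoord_symm, ← Measure.restrict_restrict (hsymm hA),
    ← lintegral_indicator (hsymm hA)]
  refine setLIntegral_congr_fun polarCoord.open_target.measurableSet fun p hp => ?_
  by_cases hpA : polarCoord.symm p ∈ A
  · have hr : (p.1 * cos p.2) ^ 2 + (p.1 * sin p.2) ^ 2 = p.1 ^ 2 := by
      linear_combination p.1 ^ 2 * cos_sq_add_sin_sq p.2
    rw [indicator_of_mem hpA, indicator_of_mem (mem_preimage.2 hpA), smul_eq_mul,
      ← ENNReal.ofReal_mul hp.1.le, polarCoord_symm_apply, hr]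
  · rw [indicator_of_notMem hpA, indicator_of_notMem (mt mem_preimage.1 hpA), smul_zero]

lemma lintegral_Ici_mul_exp_neg_sq_div_two {w : ℝ} (hw : 0 ≤ w) :
    ∫⁻ r in Ici w, ENNReal.ofReal (r * rexp (-r ^ 2 / 2)) = ENNReal.ofReal (rexp (-w ^ 2 / 2)) := by
  have hderiv : ∀ r ∈ Ioi w, HasDerivAt (fun r => -rexp (-r ^ 2 / 2)) (r * rexp (-r ^ 2 / 2)) r :=
    fun r _ => by
      have h : HasDerivAt (fun r : ℝ => -r ^ 2 / 2) (-r) r := by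
        simpa [neg_div] using ((hasDerivAt_id r).fun_pow 2).fun_neg.div_const 2
      simpa [mul_comm] using h.exp.fun_neg
  have hpos : ∀ r ∈ Ioi w, 0 ≤ r * rexp (-r ^ 2 / 2) :=
    fun r hr => mul_nonneg (hw.trans hr.out.le) (exp_pos _).le
  have hcont : ContinuousWithinAt (fun r => -rexp (-r ^ 2 / 2)) (Ici w) w :=
    (by fun_prop : Continuous fun r : ℝ => -rexp (-r ^ 2 / 2)).continuousWithinAt
  have hlim : Tendsto (fun r => -rexp (-r ^ 2 / 2)) atTop (𝓝 (-0)) :=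
    (tendsto_exp_atBot.comp ((tendsto_neg_atTop_atBot.comp
      (tendsto_pow_atTop two_ne_zero)).atBot_div_const two_pos)).neg
  rw [setLIntegral_congr Ioi_ae_eq_Ici.symm, ← ofReal_integral_eq_lintegral_ofReal
    (integrableOn_Ioi_deriv_of_nonneg hcont hderiv hpos hlim)
    ((ae_restrict_iff' measurableSet_Ioi).2 (Eventually.of_forall hpos)),
    integral_Ioi_of_hasDerivAt_of_nonneg hcont hderiv hpos hlim]
  simp

lemma cos_lt_cos_iff_abs_lt {α θ : ℝ} (hα : α ∈ Icc 0 π) (hθ : |θ| ≤ π) :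
    cos α < cos θ ↔ |θ| < α := by
  rw [← cos_abs θ]
  exact strictAntiOn_cos.lt_iff_gt hα ⟨abs_nonneg θ, hθ⟩

lemma nrm2_polar {r : ℝ} (hr : 0 ≤ r) (θ : ℝ) : nrm2 (r * sin θ, r * cos θ) = r := by
  rw [nrm2, mul_pow, mul_pow, ← mul_add, sin_sq_add_cos_sq, mul_one, sqrt_sq hr]

lemma polarCoord_symm_preimage_swap_sector (hφ : φ ∈ Ioo 0 π) {w : ℝ} (hw : 0 < w) :
    polarCoord.symm ⁻¹' (Prod.swap ⁻¹' sector φ w) ∩ polarCoord.target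
      = Ici w ×ˢ Ioo (-(φ / 2)) (φ / 2) := by
  have hφ2 : φ / 2 ∈ Icc 0 π := ⟨by linarith [hφ.1], by linarith [hφ.2, pi_pos]⟩
  ext ⟨r, θ⟩
  simp only [mem_inter_iff, mem_preimage, polarCoord_symm_apply, Prod.swap_prod_mk,
    polarCoord_target, mem_prod, mem_Ioi, mem_Ioo, mem_Ici, sector, coneE, mem_ofPred_eq]
  rw [← abs_lt, ← abs_lt]
  constructor
  · rintro ⟨⟨⟨-, hcos⟩, hwr⟩, hr, hθ⟩
    rw [nrm2_polar hr.le] at hcos hwr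
    refine ⟨hwr, (cos_lt_cos_iff_abs_lt hφ2 hθ.le).1 ?_⟩
    nlinarith
  · rintro ⟨hwr, hθ⟩
    have hr := hw.trans_le hwr
    have hθπ : |θ| < π := by linarith [hφ.1, hφ.2]
    have hcos := (cos_lt_cos_iff_abs_lt hφ2 hθπ.le).2 hθ
    rw [nrm2_polar hr.le]
    refine ⟨⟨⟨fun h => ?_, by nlinarith⟩, hwr⟩, hr, hθπ⟩
    have h2 : r * cos θ = 0 := congrArg Prod.snd h
    nlinarith [cos_half_pos hφ]

lemma measurableSet_sector (φ w : ℝ) : MeasurableSet (sector φ w) := by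
  change MeasurableSet (({0}ᶜ ∩ {z : ℝ × ℝ | nrm2 z * cos (φ / 2) < z.2}) ∩ {z | w ≤ nrm2 z})
  exact ((measurableSet_singleton 0).compl.inter
    (measurableSet_lt (continuous_nrm2.measurable.mul_const _) measurable_snd)).inter
    (measurableSet_le measurable_const continuous_nrm2.measurable)

lemma measureReal_sector (hφ : φ ∈ Ioo 0 π) {w : ℝ} (hw : 0 < w) :
    (γ₂).real (sector φ w) = φ / (2 * π) * rexp (-w ^ 2 / 2) := by
  have hS := measurableSet_sector φ w
  -- Swapping the coordinates centres the cone on the polar axis `θ = 0`.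
  rw [measureReal_def, ← Measure.measurePreserving_swap.measure_preimage hS.nullMeasurableSet,
    gaussianReal_prod_eq_lintegral_polarCoord (measurable_swap hS),
    polarCoord_symm_preimage_swap_sector hφ hw, Measure.volume_eq_prod, ← Measure.prod_restrict,
    lintegral_prod _ (by fun_prop)]
  simp_rw [lintegral_const, Measure.restrict_apply_univ, Real.volume_Ioo,
    mul_left_comm _ (2 * π)⁻¹, ENNReal.ofReal_mul (inv_nonneg.2 two_pi_pos.le)]
  rw [lintegral_mul_const' _ _ ENNReal.ofReal_ne_top,
    lintegral_const_mul' _ _ ENNReal.ofReal_ne_top, lintegral_Ici_mul_exp_neg_sq_div_two hw.le,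
    ← ENNReal.ofReal_mul (inv_nonneg.2 two_pi_pos.le), ← ENNReal.ofReal_mul (by positivity),
    ENNReal.toReal_ofReal (mul_nonneg (by positivity) (by linarith [hφ.1]))]
  ring

lemma measurableSet_wedge (φ w σ : ℝ) : MeasurableSet (wedge φ w σ) :=
  (edgeFrame φ σ).continuous_of_finiteDimensional.measurable
    (measurableSet_Ici.prod measurableSet_Ici)

lemma measureReal_wedge {σ : ℝ} (hσ : |σ| = 1) (φ w : ℝ) :
    (γ₂).real (wedge φ w σ) = (1 - stdNormalCDF w) / 2 := by
  have hdet : LinearMap.det (edgeFrame φ σ) = -σ := by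
    rw [edgeFrame, LinearMap.det_toLin, Matrix.det_fin_two_of]
    linear_combination -σ * sin_sq_add_cos_sq (φ / 2)
  have hT : ∀ z : ℝ × ℝ, (edgeFrame φ σ z).1 ^ 2 + (edgeFrame φ σ z).2 ^ 2 = z.1 ^ 2 + z.2 ^ 2 := by
    intro z
    have hσ2 : σ ^ 2 = 1 := by rw [← sq_abs, hσ, one_pow]
    simp only [edgeFrame_apply]
    linear_combination (σ ^ 2 * z.1 ^ 2 + z.2 ^ 2) * sin_sq_add_cos_sq (φ / 2) + z.1 ^ 2 * hσ2
  rw [wedge, measureReal_def, (measurePreserving_gaussianReal_prod_of_sq_add_sq _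
      (by rw [hdet, abs_neg, hσ]) hT).measure_preimage
      (measurableSet_Ici.prod measurableSet_Ici).nullMeasurableSet,
    Measure.prod_prod, ENNReal.toReal_mul, ← measureReal_def, ← measureReal_def,
    gaussianReal_real_Ici, gaussianReal_real_Ici_zero]
  ring

lemma disjoint_sector_wedge (hφ : φ ∈ Ioo 0 π) {σ : ℝ} (hσ : |σ| = 1) (w : ℝ) :
    Disjoint (sector φ w) (wedge φ w σ) :=
  disjoint_left.2 fun _ hC hW => (edgeFrame_snd_neg_of_mem_coneE hφ hσ hC.1).not_ge hW.2

lemma disjoint_wedge_one_wedge_neg_one (hφ : φ ∈ Ioo 0 π) {w : ℝ} (hw : 0 < w) :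
    Disjoint (wedge φ w 1) (wedge φ w (-1)) := by
  refine disjoint_left.2 fun z hW₁ hW₂ => ?_
  rw [mem_wedge] at hW₁ hW₂
  simp only [edgeFrame_apply] at hW₁ hW₂
  nlinarith [sin_half_pos hφ, cos_half_pos hφ]

end ConeCoverage

open ConeCoverage

/-- Let `z` be a standard bivariate normal vector, `φ ∈ (0, π)`, `w > 0`, and `E(φ)` the open
cone of half-angle `φ/2` about the positive `z₂`-axis. Then
`P( sup_{u ∈ E(φ)} (u·z)/‖u‖ < w ) = (φ/(2π))·F₂(w²) + (π-φ)/(2π) + (1/2)·F₁(w²)`. -/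
theorem one_sided_coverage_probability
    (φ w : ℝ) (hφ : φ ∈ Set.Ioo 0 π) (hw : 0 < w) :
    (((gaussianReal 0 1).prod (gaussianReal 0 1))
        {z : ℝ × ℝ | sSup ((fun u => dot2 u z / nrm2 u) '' coneE φ) < w}).toReal =
      (φ / (2 * π)) * chi2cdf (w ^ 2) + (π - φ) / (2 * π) + (1 / 2) * chi1cdf (w ^ 2) := by
  have hevent : {z : ℝ × ℝ | sSup ((fun u => dot2 u z / nrm2 u) '' coneE φ) < w}
      = (sector φ w ∪ wedge φ w 1 ∪ wedge φ w (-1))ᶜ :=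
    ext fun _ => coneSup_lt_iff hφ hw
  have hW := measurableSet_wedge φ w
  rw [← measureReal_def, hevent,
    probReal_compl_eq_one_sub (((measurableSet_sector φ w).union (hW 1)).union (hW (-1))),
    measureReal_union (disjoint_union_left.2 ⟨disjoint_sector_wedge hφ (by simp) w,
      disjoint_wedge_one_wedge_neg_one hφ hw⟩) (hW (-1)),
    measureReal_union (disjoint_sector_wedge hφ abs_one w) (hW 1), measureReal_sector hφ hw,
    measureReal_wedge abs_one, measureReal_wedge (by simp), chi1cdf, chi2cdf, sqrt_sq hw.le]
  field_simp
  ring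
end
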